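/- Classification of centers of lattice-preserving rotations of order 2: if ρ is a rotation of the plane by 180° whose center c satisfies ρ(L) = L, where L is the vertex set of the triangular lattice, then c is either a lattice vertex or the midpoint of an edge of the lattice or the centroid of a face of the lattice. -/

import Mathlib

/-!
The rotation sends `0` to `2c`, so `2c = a + bω` lies in the lattice. Reducing `a` and `b` modulo
`2` writes `c` as a lattice point plus one of `0`, `1/2`, `ω/2`, `(1 + ω)/2`: a vertex, or the
midpoint of an edge in direction `1`, `ω` or `1 - ω`. Face centroids never arise.
-/

/-- The sixth root of unity `ω = e^{iπ/3}` generating the triangular lattice. -/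
noncomputable def omg : ℂ := Complex.exp ((Real.pi : ℂ) * Complex.I / 3)

/-- The vertex set of the triangular lattice drawing `G_D`: the Eisenstein integers. -/
def TriLattice : Set ℂ := {z | ∃ a b : ℤ, z = (a : ℂ) + (b : ℂ) * omg}

open Complex

lemma omg_eq : omg = 1 / 2 + ((√3 / 2 : ℝ) : ℂ) * I := by
  have : (Real.pi : ℂ) * I / 3 = ((Real.pi / 3 : ℝ) : ℂ) * I := by push_cast; ring
  rw [omg, this, exp_mul_I, ← ofReal_cos, ← ofReal_sin, Real.cos_pi_div_three,
    Real.sin_pi_div_three]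
  push_cast; ring

lemma omg_sq : omg ^ 2 = omg - 1 := by
  have h3 : ((√3 : ℝ) : ℂ) ^ 2 = 3 := by rw [← ofReal_pow, Real.sq_sqrt (by norm_num)]; simp
  rw [omg_eq]
  push_cast
  linear_combination I ^ 2 / 4 * h3 + 3 / 4 * I_sq

lemma norm_omg : ‖omg‖ = 1 := by
  rw [omg, norm_exp]
  simp

lemma norm_one_sub_omg : ‖1 - omg‖ = 1 := by
  rw [show 1 - omg = -omg ^ 2 by rw [omg_sq]; ring, norm_neg, norm_pow, norm_omg, one_pow]

namespace TriLattice

lemma zero_mem : (0 : ℂ) ∈ TriLattice := ⟨0, 0, by simp⟩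

lemma one_mem : (1 : ℂ) ∈ TriLattice := ⟨1, 0, by simp⟩

lemma omg_mem : omg ∈ TriLattice := ⟨0, 1, by simp⟩

lemma add_mem {x y : ℂ} (hx : x ∈ TriLattice) (hy : y ∈ TriLattice) : x + y ∈ TriLattice := by
  obtain ⟨a, b, rfl⟩ := hx
  obtain ⟨a', b', rfl⟩ := hy
  exact ⟨a + a', b + b', by push_cast; ring⟩

lemma two_mul_mem_of_image_rotation_eq {c : ℂ}
    (h : (fun p => 2 * c - p) '' TriLattice = TriLattice) : 2 * c ∈ TriLattice :=
  h ▸ ⟨0, zero_mem, sub_zero _⟩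

theorem mem_or_eq_edge_midpoint_of_two_mul_mem {c : ℂ} (hc : 2 * c ∈ TriLattice) :
    c ∈ TriLattice ∨
      ∃ u v : ℂ, u ∈ TriLattice ∧ v ∈ TriLattice ∧ ‖u - v‖ = 1 ∧ c = (u + v) / 2 := by
  obtain ⟨a, b, hab⟩ := hc
  set p : ℂ := ((a / 2 : ℤ) : ℂ) + ((b / 2 : ℤ) : ℂ) * omg
  have hp : p ∈ TriLattice := ⟨_, _, rfl⟩
  have hc : c = p + (((a % 2 : ℤ) : ℂ) + ((b % 2 : ℤ) : ℂ) * omg) / 2 := by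
    have ha : (a : ℂ) = 2 * ((a / 2 : ℤ) : ℂ) + ((a % 2 : ℤ) : ℂ) := by
      exact_mod_cast (Int.mul_ediv_add_emod a 2).symm
    have hb : (b : ℂ) = 2 * ((b / 2 : ℤ) : ℂ) + ((b % 2 : ℤ) : ℂ) := by
      exact_mod_cast (Int.mul_ediv_add_emod b 2).symm
    linear_combination (hab + ha + omg * hb) / 2
  rcases Int.emod_two_eq_zero_or_one a with ha | ha <;>
    rcases Int.emod_two_eq_zero_or_one b with hb | hb <;>
    rw [ha, hb] at hc <;> push_cast at hc
  · exact Or.inl (by simpa [hc] using hp)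
  · exact Or.inr ⟨p + omg, p, add_mem hp omg_mem, hp, by simpa using norm_omg,
      by rw [hc]; ring⟩
  · exact Or.inr ⟨p + 1, p, add_mem hp one_mem, hp, by simp, by rw [hc]; ring⟩
  · refine Or.inr ⟨p + 1, p + omg, add_mem hp one_mem, add_mem hp omg_mem, ?_,
      by rw [hc]; ring⟩
    rw [show p + 1 - (p + omg) = 1 - omg by ring]
    exact norm_one_sub_omg

end TriLattice

/-- classification of centers of lattice-preserving rotations of order 2:
the center is a lattice vertex, an edge midpoint, or a face centroid. -/
theorem order_two_center_classification (c : ℂ)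
    (h : (fun p => 2 * c - p) '' TriLattice = TriLattice) :
    c ∈ TriLattice ∨
      (∃ u v : ℂ, u ∈ TriLattice ∧ v ∈ TriLattice ∧ ‖u - v‖ = 1 ∧ c = (u + v) / 2) ∨
      (∃ u v w : ℂ, u ∈ TriLattice ∧ v ∈ TriLattice ∧ w ∈ TriLattice ∧
        ‖u - v‖ = 1 ∧ ‖v - w‖ = 1 ∧ ‖u - w‖ = 1 ∧
        c = (u + v + w) / 3) := by
  rcases TriLattice.mem_or_eq_edge_midpoint_of_two_mul_mem
      (TriLattice.two_mul_mem_of_image_rotation_eq h) with hc | hc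
  exacts [Or.inl hc, Or.inr (Or.inl hc)]
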